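/- Let ·: H⊗A → A be a symmetrical partial action on an associative algebra A, and let φ: A → Hom(H,A) be given by φ(a)(h) = h·a, where Hom(H,A) is the convolution algebra with left H-action (k▷f)(h) = f(hk). Then B = H▷φ(A) is an H-module subalgebra of Hom(H,A), φ(A) is an ideal of B, and (B,φ) is a minimal globalization of the partial action. -/

import Mathlib

/-!
Convolution with translates factors through the antipode:
`(p ▷ x) * (q ▷ y) = Σ p₁ ▷ (x * (S(p₂) q ▷ y))`. Since the partial action axiom reads
`φ(a) * (h ▷ φ(b)) = φ(a (h · b))` in `Hom(H, A)`, the product of two generators `p ▷ φ(a)` and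
`q ▷ φ(b)` of `B` is `Σ p₁ ▷ φ(a (S(p₂) q · b))`, so `B` is a subalgebra; the same axiom and its
symmetric counterpart make `φ(A)` an ideal of `B`. The map `φ` is injective because
`φ(a)(1) = a`, and minimality holds because `(Σ hᵢ ▷ φ(aᵢ))(g) = Σ g hᵢ · aᵢ`.
-/

open TensorProduct

section PartialHopfPrelude

variable (k : Type) [Field k] (H : Type) [Ring H] [HopfAlgebra k H]

/-- Sweedler-style sum `Σ f h₁ h₂` over the comultiplication of `h`. -/
noncomputable def sweedler {M : Type} [AddCommGroup M] [Module k M]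
    (f : H →ₗ[k] H →ₗ[k] M) (h : H) : M :=
  TensorProduct.lift f (Coalgebra.comul h)

variable {A : Type} [AddCommGroup A] [Module k A]

/-- `Σ (h₁ · a) * (h₂ g · b)`, with an explicit multiplication `mA` on `A`. -/
noncomputable def paRhs (mA : A →ₗ[k] A →ₗ[k] A) (act : H →ₗ[k] A →ₗ[k] A)
    (h g : H) (a b : A) : A :=
  sweedler k H ((mA.comp (act.flip a)).compl₂ ((act.flip b).comp (LinearMap.mulRight k g))) h

/-- `Σ (h₁ g · b) * (h₂ · a)`, with an explicit multiplication `mA` on `A`. -/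
noncomputable def paSymmRhs (mA : A →ₗ[k] A →ₗ[k] A) (act : H →ₗ[k] A →ₗ[k] A)
    (h g : H) (a b : A) : A :=
  sweedler k H ((mA.comp ((act.flip b).comp (LinearMap.mulRight k g))).compl₂ (act.flip a)) h

/-- A (left) partial action of the Hopf algebra `H` on `A`, where the (possibly nonunital,
possibly nonassociative) multiplication of `A` is given explicitly as a bilinear map `mA`:
`1_H · a = a` and `h · (a (g · b)) = Σ (h₁ · a)(h₂ g · b)`. -/
structure IsPartialActionOn (mA : A →ₗ[k] A →ₗ[k] A) (act : H →ₗ[k] A →ₗ[k] A) : Prop where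
  one_act : ∀ a : A, act 1 a = a
  act_assoc : ∀ (h g : H) (a b : A), act h (mA a (act g b)) = paRhs k H mA act h g a b

/-- A symmetrical partial action: additionally `h · ((g · b) a) = Σ (h₁ g · b)(h₂ · a)`. -/
structure IsSymmPartialActionOn (mA : A →ₗ[k] A →ₗ[k] A) (act : H →ₗ[k] A →ₗ[k] A)
    extends IsPartialActionOn k H mA act : Prop where
  act_symm : ∀ (h g : H) (a b : A), act h (mA (act g b) a) = paSymmRhs k H mA act h g a b

variable {B : Type} [NonUnitalRing B] [Module k B] [SMulCommClass k B B] [IsScalarTower k B B]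

/-- A partial action of `H` on the nonunital algebra `B` (with its own multiplication). -/
def IsPartialAction (act : H →ₗ[k] B →ₗ[k] B) : Prop :=
  IsPartialActionOn k H (LinearMap.mul k B) act

/-- A symmetrical partial action of `H` on the nonunital algebra `B`. -/
def IsSymmPartialAction (act : H →ₗ[k] B →ₗ[k] B) : Prop :=
  IsSymmPartialActionOn k H (LinearMap.mul k B) act

end PartialHopfPrelude

section Stmt12

variable {k : Type} [Field k] {H : Type} [Ring H] [HopfAlgebra k H]
variable {A : Type} [NonUnitalRing A] [Module k A] [SMulCommClass k A A] [IsScalarTower k A A]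

/-- The convolution product on `Hom(H, A)`: `(f * g)(h) = Σ f(h₁) g(h₂)`. -/
noncomputable def convL : (H →ₗ[k] A) →ₗ[k] (H →ₗ[k] A) →ₗ[k] (H →ₗ[k] A) :=
  (TensorProduct.mapBilinear (RingHom.id k) H H A A).compr₂
    (((LinearMap.llcomp k H (H ⊗[k] H) A).flip (Coalgebra.comul)).comp
      (LinearMap.llcomp k (H ⊗[k] H) (A ⊗[k] A) A (LinearMap.mul' k A)))

/-- The left `H`-action on `Hom(H, A)`: `(g ▷ f)(h) = f (h g)`. -/
noncomputable def gactC : H →ₗ[k] (H →ₗ[k] A) →ₗ[k] (H →ₗ[k] A) :=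
  ((LinearMap.llcomp k H H A).flip).comp ((LinearMap.mul k H).flip)

end Stmt12

open Coalgebra HopfAlgebra

section HopfAlgebra

variable {R C : Type*} [CommSemiring R] [Semiring C] [HopfAlgebra R C]

lemma sum_tmul_mul_antipode_eq {c : C} {ι : Type*} {κ : ι → Type*} (r : Repr R c ι)
    (r₁ : (i : ι) → Repr R (r.left i) (κ i)) :
    ∑ i ∈ r.index, ∑ j ∈ (r₁ i).index,
      (r₁ i).left j ⊗ₜ[R] ((r₁ i).right j * antipode R (r.right i)) = c ⊗ₜ[R] 1 := by
  have coassoc := sum_tmul_tmul_eq r r₁ (fun i ↦ ℛ R (r.right i))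
  apply_fun (TensorProduct.lift ((LinearMap.mul R C).compl₂ (antipode R))).lTensor C at coassoc
  have counit := congrArg ((Algebra.linearMap R C).lTensor C) (sum_tmul_counit_eq (R := R) r)
  simp only [map_sum, LinearMap.lTensor_tmul, TensorProduct.lift.tmul, LinearMap.compl₂_apply,
    LinearMap.mul_apply', ← TensorProduct.tmul_sum, sum_mul_antipode_eq_algebraMap_counit]
    at coassoc counit
  rw [coassoc]
  simpa using counit

end HopfAlgebra

section ConvolutionAlgebra

variable {k : Type} [Field k] {H : Type} [Ring H] [HopfAlgebra k H]
variable {A : Type} [NonUnitalRing A] [Module k A] {ι : Type*}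

lemma sweedler_eq_sum {M : Type} [AddCommGroup M] [Module k M] (f : H →ₗ[k] H →ₗ[k] M) {h : H}
    (r : Repr k h ι) : sweedler k H f h = ∑ i ∈ r.index, f (r.left i) (r.right i) := by
  simp [sweedler, ← r.eq]

@[simp]
lemma gactC_apply (h : H) (f : H →ₗ[k] A) (g : H) : gactC h f g = f (g * h) := rfl

lemma gactC_one (f : H →ₗ[k] A) : gactC (1 : H) f = f := by
  ext g; simp

lemma gactC_gactC (h g : H) (f : H →ₗ[k] A) : gactC h (gactC g f) = gactC (h * g) f := by
  ext t; simp [mul_assoc]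

variable [SMulCommClass k A A] [IsScalarTower k A A]

lemma convL_apply_eq_sum (x y : H →ₗ[k] A) {g : H} (r : Repr k g ι) :
    convL x y g = ∑ i ∈ r.index, x (r.left i) * y (r.right i) := by
  change LinearMap.mul' k A (TensorProduct.map x y (comul g)) = _
  simp [← r.eq]

lemma gactC_convL_eq_sum (h : H) (x y : H →ₗ[k] A) (r : Repr k h ι) :
    gactC h (convL x y) = ∑ i ∈ r.index, convL (gactC (r.left i) x) (gactC (r.right i) y) := by
  ext g
  simp only [gactC_apply, LinearMap.sum_apply, convL_apply_eq_sum _ _ ((ℛ k g).mul r),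
    convL_apply_eq_sum _ _ (ℛ k g), Repr.mul_index, Repr.mul_left, Repr.mul_right]
  exact Finset.sum_product_right _ _ _

lemma gactC_convL (h : H) (x y : H →ₗ[k] A) :
    gactC h (convL x y) =
      sweedler k H ((convL.comp ((gactC (A := A)).flip x)).compl₂ (gactC.flip y)) h := by
  rw [gactC_convL_eq_sum h x y (ℛ k h), sweedler_eq_sum _ (ℛ k h)]
  rfl

lemma convL_gactC_gactC (p q : H) (x y : H →ₗ[k] A) :
    convL (gactC p x) (gactC q y) = ∑ i ∈ (ℛ k p).index,
      gactC ((ℛ k p).left i) (convL x (gactC (antipode k ((ℛ k p).right i) * q) y)) := by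
  set r := ℛ k p
  let twisted : H →ₗ[k] H →ₗ[k] (H →ₗ[k] A) :=
    (convL.comp ((gactC (A := A)).flip x)).compl₂ ((gactC.flip y).comp (LinearMap.mulRight k q))
  -- expand `p₁ ▷ (x * _)` by the module-algebra law; then `Σ p₁ ⊗ p₂ S(p₃) = p ⊗ 1` collapses it
  have key := congrArg (TensorProduct.lift twisted)
    (sum_tmul_mul_antipode_eq r (fun i ↦ ℛ k (r.left i)))
  simp only [map_sum, TensorProduct.lift.tmul, twisted, LinearMap.compl₂_apply,
    LinearMap.comp_apply, LinearMap.flip_apply, LinearMap.mulRight_apply, one_mul] at key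
  simp only [gactC_convL_eq_sum _ _ _ (ℛ k (r.left _)), gactC_gactC, ← mul_assoc]
  exact key.symm

end ConvolutionAlgebra

section StandardGlobalization

variable {k : Type} [Field k] {H : Type} [Ring H] [HopfAlgebra k H]
variable {A : Type} [NonUnitalRing A] [Module k A] {act : H →ₗ[k] A →ₗ[k] A}

variable (act) in
def standardGlobalization : Submodule k (H →ₗ[k] A) :=
  Submodule.span k {y | ∃ (h : H) (a : A), y = gactC h (act.flip a)}

lemma gactC_mem_standardGlobalization (g : H) {x : H →ₗ[k] A}
    (hx : x ∈ standardGlobalization act) : gactC g x ∈ standardGlobalization act := by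
  refine (Submodule.span_le (p := (standardGlobalization act).comap (gactC g))).mpr ?_ hx
  rintro _ ⟨h, a, rfl⟩
  rw [SetLike.mem_coe, Submodule.mem_comap, gactC_gactC]
  exact Submodule.subset_span ⟨g * h, a, rfl⟩

variable [SMulCommClass k A A] [IsScalarTower k A A]

lemma flip_mul_act_eq_convL (hpa : IsPartialAction k H act) (h : H) (a b : A) :
    act.flip (a * act h b) = convL (act.flip a) (gactC h (act.flip b)) := by
  ext g
  have := hpa.act_assoc g h a b
  simp only [LinearMap.mul_apply'] at this
  rw [LinearMap.flip_apply, this, paRhs, sweedler_eq_sum _ (ℛ k g),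
    convL_apply_eq_sum _ _ (ℛ k g)]
  simp

lemma flip_act_mul_eq_convL (hpa : IsSymmPartialAction k H act) (h : H) (a b : A) :
    act.flip (act h b * a) = convL (gactC h (act.flip b)) (act.flip a) := by
  ext g
  have := hpa.act_symm g h a b
  simp only [LinearMap.mul_apply'] at this
  rw [LinearMap.flip_apply, this, paSymmRhs, sweedler_eq_sum _ (ℛ k g),
    convL_apply_eq_sum _ _ (ℛ k g)]
  simp

lemma flip_mul_eq_convL (hpa : IsPartialAction k H act) (a b : A) :
    act.flip (a * b) = convL (act.flip a) (act.flip b) := by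
  simpa [gactC_one, hpa.one_act] using flip_mul_act_eq_convL hpa 1 a b

lemma convL_mem_standardGlobalization (hpa : IsPartialAction k H act) {x y : H →ₗ[k] A}
    (hx : x ∈ standardGlobalization act) (hy : y ∈ standardGlobalization act) :
    convL x y ∈ standardGlobalization act := by
  refine Submodule.map₂_le.mp ?_ x hx y hy
  rw [standardGlobalization, Submodule.map₂_span_span, Submodule.span_le]
  rintro _ ⟨_, ⟨p, a, rfl⟩, _, ⟨q, b, rfl⟩, rfl⟩
  change convL (gactC p _) (gactC q _) ∈ standardGlobalization act
  rw [convL_gactC_gactC]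
  refine Submodule.sum_mem _ fun i _ ↦ ?_
  rw [← flip_mul_act_eq_convL hpa]
  exact Submodule.subset_span ⟨_, _, rfl⟩

lemma convL_flip_left_mem_range (hpa : IsPartialAction k H act) (a : A) {x : H →ₗ[k] A}
    (hx : x ∈ standardGlobalization act) : convL (act.flip a) x ∈ LinearMap.range act.flip := by
  refine (Submodule.span_le (p := (LinearMap.range act.flip).comap (convL (act.flip a)))).mpr ?_ hx
  rintro _ ⟨h, b, rfl⟩
  exact ⟨_, flip_mul_act_eq_convL hpa h a b⟩

lemma convL_flip_right_mem_range (hpa : IsSymmPartialAction k H act) (a : A) {x : H →ₗ[k] A}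
    (hx : x ∈ standardGlobalization act) : convL x (act.flip a) ∈ LinearMap.range act.flip := by
  refine (Submodule.span_le (p := (LinearMap.range act.flip).comap (convL.flip (act.flip a)))).mpr
    ?_ hx
  rintro _ ⟨h, b, rfl⟩
  exact ⟨_, flip_act_mul_eq_convL hpa h a b⟩

lemma flip_injective_of_isPartialAction (hpa : IsPartialAction k H act) :
    Function.Injective act.flip := fun a b hab ↦ by
  simpa [hpa.one_act] using congrArg (fun f : H →ₗ[k] A ↦ f 1) hab

end StandardGlobalization

section Stmt12

variable {k : Type} [Field k] {H : Type} [Ring H] [HopfAlgebra k H]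
variable {A : Type} [NonUnitalRing A] [Module k A] [SMulCommClass k A A] [IsScalarTower k A A]

/-- Let `act` be a symmetrical partial action of `H` on `A`, and let
`φ : A → Hom(H,A)`, `φ(a)(h) = h · a`.  Then `B = H ▷ φ(A)` is an `H`-module subalgebra of
the convolution algebra `Hom(H,A)`, `φ(A)` is an ideal of `B`, and `(B, φ)` is a minimal
globalization of the partial action. -/
theorem standard_globalization
    (act : H →ₗ[k] A →ₗ[k] A) (hpa : IsSymmPartialAction k H act) :
    -- `B = H ▷ φ(A)` is an `H`-submodule subalgebra of `Hom(H, A)`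
    (∀ x ∈ Submodule.span k
        {y : H →ₗ[k] A | ∃ (h : H) (a : A), y = gactC h (act.flip a)},
      ∀ y' ∈ Submodule.span k
        {y : H →ₗ[k] A | ∃ (h : H) (a : A), y = gactC h (act.flip a)},
      convL x y' ∈ Submodule.span k
        {y : H →ₗ[k] A | ∃ (h : H) (a : A), y = gactC h (act.flip a)}) ∧
    (∀ (g : H), ∀ x ∈ Submodule.span k
        {y : H →ₗ[k] A | ∃ (h : H) (a : A), y = gactC h (act.flip a)},
      gactC g x ∈ Submodule.span k
        {y : H →ₗ[k] A | ∃ (h : H) (a : A), y = gactC h (act.flip a)}) ∧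
    -- `φ(A)` is an ideal of `B`
    (∀ (a : A), ∀ x ∈ Submodule.span k
        {y : H →ₗ[k] A | ∃ (h : H) (a : A), y = gactC h (act.flip a)},
      convL (act.flip a) x ∈ Set.range act.flip ∧
      convL x (act.flip a) ∈ Set.range act.flip) ∧
    -- the `H`-action is a module-algebra action for the convolution product
    (∀ f : H →ₗ[k] A, gactC (1 : H) f = f) ∧
    (∀ (h g : H) (f : H →ₗ[k] A), gactC h (gactC g f) = gactC (h * g) f) ∧
    (∀ (h : H) (x y : H →ₗ[k] A),
      gactC h (convL x y) =
        sweedler k H ((convL.comp ((gactC (A := A)).flip x)).compl₂ (gactC.flip y)) h) ∧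
    -- `φ` is an algebra monomorphism intertwining the actions as a globalization
    Function.Injective (act.flip : A →ₗ[k] (H →ₗ[k] A)) ∧
    (∀ a b : A, act.flip (a * b) = convL (act.flip a) (act.flip b)) ∧
    (∀ (h : H) (a b : A),
      act.flip (act h a * b) = convL (gactC h (act.flip a)) (act.flip b)) ∧
    (∀ (h : H) (a b : A),
      act.flip (b * act h a) = convL (act.flip b) (gactC h (act.flip a))) ∧
    -- minimality
    (∀ (n : ℕ) (h : Fin n → H) (a : Fin n → A),
      (∀ g : H, ∑ i, act (g * h i) (a i) = 0) →
      ∑ i, gactC (h i) (act.flip (a i)) = 0) := by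
  have hpa' : IsPartialAction k H act := hpa.toIsPartialActionOn
  refine ⟨fun x hx y hy ↦ convL_mem_standardGlobalization hpa' hx hy,
    fun g x hx ↦ gactC_mem_standardGlobalization g hx,
    fun a x hx ↦ ⟨convL_flip_left_mem_range hpa' a hx, convL_flip_right_mem_range hpa a hx⟩,
    gactC_one, gactC_gactC, gactC_convL, flip_injective_of_isPartialAction hpa', flip_mul_eq_convL hpa',
    fun h a b ↦ flip_act_mul_eq_convL hpa h b a, fun h a b ↦ flip_mul_act_eq_convL hpa' h b a,
    fun n h a hmin ↦ LinearMap.ext fun g ↦ by simpa using hmin g⟩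

end Stmt12
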